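/- Let N ≥ 1 be an integer, p a real parameter, and let d, n ≥ 0 be integers with n ≠ d. Then, as an identity of real polynomials in x, p·(x−N)·K̂_n^{(1,d)}(x;p,N) + (1−p)·x·K̂_n^{(1,d)}(x−1;p,N) = K_d(x;p,N)·K_n(x;p,N). (That is, the backward Darboux operator B^{(1,d)} maps the type-1 exceptional Krawtchouk polynomial K̂_n^{(1,d)} back to the ordinary Krawtchouk polynomial K_n.) -/
import Mathlib


open Polynomial

/-- Pochhammer symbol `(c)_k = c (c+1) ⋯ (c+k−1)`. -/
noncomputable def poch (c : ℝ) (k : ℕ) : ℝ := ∏ i ∈ Finset.range k, (c + i)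

/-- The monic Krawtchouk polynomial
`K_n(x;p,a) = Σ_{j=0}^{n} ((−n)_j (−a+j)_{n−j} / j!) p^{n−j} (−x)_j`,
where `(−x)_j = Π_{i=0}^{j−1} (i − x)` as a polynomial in `x`. -/
noncomputable def kraw (n : ℕ) (p a : ℝ) : Polynomial ℝ :=
  ∑ j ∈ Finset.range (n + 1),
    Polynomial.C (poch (-(n : ℝ)) j * poch (-a + j) (n - j) / (Nat.factorial j) * p ^ (n - j)) *
      ∏ i ∈ Finset.range j, (Polynomial.C (i : ℝ) - Polynomial.X)

/-- The type-1 exceptional Krawtchouk polynomial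
`K̂_n^{(1,d)}(x;p,N) = (K_d(x;p,N) K_n(x+1;p,N) − K_d(x+1;p,N) K_n(x;p,N))/(n−d)`. -/
noncomputable def xkraw1 (d n : ℕ) (p N : ℝ) : Polynomial ℝ :=
  Polynomial.C (1 / ((n : ℝ) - (d : ℝ))) *
    (kraw d p N * (kraw n p N).comp (Polynomial.X + 1) -
      (kraw d p N).comp (Polynomial.X + 1) * kraw n p N)

/- ### Auxiliary material -/


noncomputable def kc (m : ℕ) (p a : ℝ) (j : ℕ) : ℝ :=
  poch (-(m : ℝ)) j * poch (-a + j) (m - j) / (Nat.factorial j) * p ^ (m - j)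

noncomputable def Phi (j : ℕ) (x : ℝ) : ℝ := ∏ i ∈ Finset.range j, ((i : ℝ) - x)

lemma poch_succ (c : ℝ) (k : ℕ) : poch c (k + 1) = poch c k * (c + k) :=
  Finset.prod_range_succ _ _

lemma poch_succ' (c : ℝ) (k : ℕ) : poch c (k + 1) = c * poch (c + 1) k := by
  unfold poch
  rw [Finset.prod_range_succ']
  push_cast
  rw [mul_comm]
  congr 1
  · ring
  · exact Finset.prod_congr rfl fun i _ => by push_cast; ring

lemma Phi_succ (j : ℕ) (x : ℝ) : Phi (j + 1) x = Phi j x * ((j : ℝ) - x) :=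
  Finset.prod_range_succ _ _

lemma Phi_shift_down (j : ℕ) (x : ℝ) : x * Phi j (x - 1) = -Phi (j + 1) x := by
  unfold Phi
  rw [Finset.prod_range_succ']
  push_cast
  rw [show (∏ i ∈ Finset.range j, ((i : ℝ) + 1 - x)) = ∏ i ∈ Finset.range j, ((i : ℝ) - (x - 1))
    from Finset.prod_congr rfl fun i _ => by ring]
  ring

lemma Phi_shift_up (j : ℕ) (x : ℝ) : Phi (j + 1) (x + 1) = (-1 - x) * Phi j x := by
  unfold Phi
  rw [Finset.prod_range_succ']
  push_cast
  rw [show (∏ i ∈ Finset.range j, ((i : ℝ) + 1 - (x + 1))) = ∏ i ∈ Finset.range j, ((i : ℝ) - x)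
    from Finset.prod_congr rfl fun i _ => by ring]
  ring

lemma term_identity (m j : ℕ) (p a x : ℝ) :
    p * (x - a) * Phi j (x + 1) - (1 - p) * (x * Phi j (x - 1)) -
      (p * (x - a) - (1 - p) * x + (m : ℝ)) * Phi j x
    = p * (j : ℝ) * (a - (j : ℝ) + 1) * Phi (j - 1) x + ((j : ℝ) - (m : ℝ)) * Phi j x := by
  cases j with
  | zero =>
    simp only [Phi, Finset.range_zero, Finset.prod_empty, Nat.cast_zero, Nat.zero_sub]
    ring
  | succ k =>
    have h1 := Phi_shift_down (k + 1) x
    rw [Phi_succ (k + 1) x, Phi_succ k x] at h1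
    rw [Phi_shift_up, Nat.add_sub_cancel, Phi_succ k x]
    push_cast at h1 ⊢
    linear_combination (-(1 - p)) * h1

lemma kc_rec (m : ℕ) (p a : ℝ) (j : ℕ) (hj : j < m) :
    kc m p a (j + 1) * (p * ((j : ℝ) + 1) * (a - (j : ℝ))) = ((m : ℝ) - (j : ℝ)) * kc m p a j := by
  obtain ⟨k, hk⟩ : ∃ k, m - j = k + 1 := ⟨m - j - 1, by omega⟩
  have h1 : m - (j + 1) = k := by omega
  unfold kc
  rw [h1, hk, poch_succ (-(m : ℝ)) j, poch_succ' (-a + (j : ℝ))]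
  rw [show (-a + (j : ℝ)) + 1 = -a + ((j : ℕ) + 1 : ℕ) by push_cast; ring]
  rw [Nat.factorial_succ]
  have hf : ((Nat.factorial j : ℝ)) ≠ 0 := by exact_mod_cast (Nat.factorial_ne_zero j)
  have hj1 : ((j : ℝ) + 1) ≠ 0 := by positivity
  push_cast
  field_simp
  ring

lemma kraw_eval (m : ℕ) (p a x : ℝ) :
    (kraw m p a).eval x = ∑ j ∈ Finset.range (m + 1), kc m p a j * Phi j x := by
  unfold kraw kc Phi
  rw [Polynomial.eval_finset_sum]
  exact Finset.sum_congr rfl fun j _ => by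
    rw [Polynomial.eval_mul, Polynomial.eval_C, Polynomial.eval_prod]
    congr 1
    exact Finset.prod_congr rfl fun i _ => by simp

lemma diffeq_eval (m : ℕ) (p a x : ℝ) :
    p * (x - a) * (kraw m p a).eval (x + 1) - (1 - p) * x * (kraw m p a).eval (x - 1)
    = (p * (x - a) - (1 - p) * x + (m : ℝ)) * (kraw m p a).eval x := by
  rw [kraw_eval, kraw_eval, kraw_eval]
  have key : ∑ j ∈ Finset.range (m + 1),
      kc m p a j * (p * (x - a) * Phi j (x + 1) - (1 - p) * (x * Phi j (x - 1)) -
        (p * (x - a) - (1 - p) * x + (m : ℝ)) * Phi j x) = 0 := by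
    have step1 : ∑ j ∈ Finset.range (m + 1),
        kc m p a j * (p * (x - a) * Phi j (x + 1) - (1 - p) * (x * Phi j (x - 1)) -
          (p * (x - a) - (1 - p) * x + (m : ℝ)) * Phi j x)
        = (∑ j ∈ Finset.range (m + 1),
            kc m p a j * (p * (j : ℝ) * (a - (j : ℝ) + 1)) * Phi (j - 1) x) +
          ∑ j ∈ Finset.range (m + 1), kc m p a j * ((j : ℝ) - (m : ℝ)) * Phi j x := by
      rw [← Finset.sum_add_distrib]
      exact Finset.sum_congr rfl fun j _ => by rw [term_identity]; ring
    rw [step1, Finset.sum_range_succ' (fun j => kc m p a j * (p * (j : ℝ) * (a - (j : ℝ) + 1)) * Phi (j - 1) x) m,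
        Finset.sum_range_succ (fun j => kc m p a j * ((j : ℝ) - (m : ℝ)) * Phi j x) m]
    simp only [Nat.cast_zero, mul_zero, zero_mul, mul_one, add_zero, sub_self, zero_add]
    have e2 : ∀ j ∈ Finset.range m,
        kc m p a (j + 1) * (p * ((j + 1 : ℕ) : ℝ) * (a - ((j + 1 : ℕ) : ℝ) + 1)) * Phi ((j + 1) - 1) x
        = -(kc m p a j * ((j : ℝ) - (m : ℝ)) * Phi j x) := by
      intro j hj
      have hjm : j < m := Finset.mem_range.mp hj
      have := kc_rec m p a j hjm
      rw [Nat.add_sub_cancel]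
      push_cast
      linear_combination (Phi j x) * this
    rw [Finset.sum_congr rfl e2, ← Finset.sum_add_distrib]
    simp
  have expand : p * (x - a) * (∑ j ∈ Finset.range (m + 1), kc m p a j * Phi j (x + 1)) -
      (1 - p) * x * (∑ j ∈ Finset.range (m + 1), kc m p a j * Phi j (x - 1)) -
      (p * (x - a) - (1 - p) * x + (m : ℝ)) * (∑ j ∈ Finset.range (m + 1), kc m p a j * Phi j x)
      = ∑ j ∈ Finset.range (m + 1),
          kc m p a j * (p * (x - a) * Phi j (x + 1) - (1 - p) * (x * Phi j (x - 1)) -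
            (p * (x - a) - (1 - p) * x + (m : ℝ)) * Phi j x) := by
    rw [Finset.mul_sum, Finset.mul_sum, Finset.mul_sum, ← Finset.sum_sub_distrib,
      ← Finset.sum_sub_distrib]
    exact Finset.sum_congr rfl fun j _ => by ring
  linarith [expand.trans key]

lemma diffeq (m : ℕ) (p a : ℝ) :
    Polynomial.C p * (Polynomial.X - Polynomial.C a) * (kraw m p a).comp (Polynomial.X + 1) -
      Polynomial.C (1 - p) * Polynomial.X * (kraw m p a).comp (Polynomial.X - 1)
    = (Polynomial.C p * (Polynomial.X - Polynomial.C a) - Polynomial.C (1 - p) * Polynomial.X +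
        Polynomial.C (m : ℝ)) * kraw m p a := by
  apply Polynomial.funext
  intro x
  simp only [eval_mul, eval_add, eval_sub, eval_comp, eval_C, eval_X, eval_one]
  exact diffeq_eval m p a x

/-- The backward Darboux operator maps the type-1 exceptional Krawtchouk polynomial back to the
ordinary one:
`p(x−N) K̂_n^{(1,d)}(x;p,N) + (1−p) x K̂_n^{(1,d)}(x−1;p,N) = K_d(x;p,N) K_n(x;p,N)`. -/
theorem krawtchouk_backward_on_exceptional1 (N : ℕ) (hN : 1 ≤ N) (p : ℝ)
    (d n : ℕ) (hnd : n ≠ d) :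
    Polynomial.C p * (Polynomial.X - Polynomial.C (N : ℝ)) * xkraw1 d n p (N : ℝ) +
        Polynomial.C (1 - p) * Polynomial.X *
          (xkraw1 d n p (N : ℝ)).comp (Polynomial.X - 1) =
      kraw d p (N : ℝ) * kraw n p (N : ℝ) := by
  have hnd' : (n : ℝ) - (d : ℝ) ≠ 0 := sub_ne_zero.mpr (by exact_mod_cast hnd)
  have hC : (Polynomial.C (1 / ((n : ℝ) - (d : ℝ))) : Polynomial ℝ) *
      (Polynomial.C (n : ℝ) - Polynomial.C (d : ℝ)) = 1 := by
    rw [← Polynomial.C_sub, ← Polynomial.C_mul, one_div, inv_mul_cancel₀ hnd', Polynomial.C_1]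
  have hcomp : ∀ f : Polynomial ℝ, (f.comp (Polynomial.X + 1)).comp (Polynomial.X - 1) = f := by
    intro f
    rw [Polynomial.comp_assoc]
    simp
  have hn := diffeq n p (N : ℝ)
  have hd := diffeq d p (N : ℝ)
  unfold xkraw1
  rw [Polynomial.mul_comp, Polynomial.sub_comp, Polynomial.mul_comp, Polynomial.mul_comp,
    Polynomial.C_comp, hcomp, hcomp]
  linear_combination (Polynomial.C (1 / ((n : ℝ) - (d : ℝ))) * kraw d p (N : ℝ)) * hn -
    (Polynomial.C (1 / ((n : ℝ) - (d : ℝ))) * kraw n p (N : ℝ)) * hd +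
    (kraw d p (N : ℝ) * kraw n p (N : ℝ)) * hC
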